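/- arXiv:2101.10290 — 5 statements merged into one kernel-verified Lean document; each statement's English description precedes it below -/
import Mathlib

section
/- Let H be a complex Hilbert space and A : H →L[ℂ] H a bounded self-adjoint operator with 0 ≤ re⟪A u, u⟫ for all u ∈ H, and let S t := cfc (fun x : ℝ => if x = 0 then t else Real.sin (t * Real.sqrt x) / Real.sqrt x) A be defined through the continuous functional calculus. Let f : ℝ → H be continuous with compact support. Then: (i) the retarded solution u(t) := ∫_{s ∈ Iic t} (S (t − s)) (f s) ds is twice continuously differentiable and satisfies u″(t) + A (u t) = f t for all t, and u t = 0 whenever t ≤ s for every s in the support of f; (ii) the advanced solution v(t) := −∫_{s ∈ Ici t} (S (t − s)) (f s) ds is twice continuously differentiable and satisfies v″(t) + A (v t) = f t for all t, and v t = 0 whenever t ≥ s for every s in the support of f. -/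
open scoped InnerProductSpace
open MeasureTheory

/-!
Write `S t = sin (t √A) / √A` and `C t = cos (t √A)`. The scalar identities `∂ₜ S = C`,
`∂ₜ C = -A S`, `S (t - s) = S t C s - C t S s` and `C² + A S² = 1` pass to the functional
calculus, the derivatives through a second-order Taylor bound that is uniform on the spectrum
`σ(A) ⊆ [0, ‖A‖]`. The subtraction formula splits the Duhamel integral as
`∫ₐᵗ S (t - s) f s ds = S t ∫ₐᵗ C s f s ds - C t ∫ₐᵗ S s f s ds`, so the product rule and the
fundamental theorem of calculus differentiate it twice, and `C² + A S² = 1` turns the second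
derivative into `f - A u`. With `a` below (resp. above) the support of `f`, this integral is the
retarded (resp. advanced) solution; it vanishes on the far side of the support because `S 0 = 0`.
-/

namespace AbstractWave

open Real Set

lemma _root_.Real.mul_sinc (z : ℝ) : z * sinc z = sin z := by
  rcases eq_or_ne z 0 with rfl | hz
  · simp
  · rw [sinc_of_ne_zero hz, mul_div_cancel₀ _ hz]

lemma norm_sub_sub_smul_le_of_hasDerivAt {E : Type*} [NormedAddCommGroup E] [NormedSpace ℝ E]
    {φ φ' φ'' : ℝ → E} {M : ℝ} (hφ : ∀ t, HasDerivAt φ (φ' t) t)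
    (hφ' : ∀ t, HasDerivAt φ' (φ'' t) t) (hM : ∀ t, ‖φ'' t‖ ≤ M) (t₀ t : ℝ) :
    ‖φ t - φ t₀ - (t - t₀) • φ' t₀‖ ≤ M * (t - t₀) ^ 2 := by
  have hlip : ∀ s ∈ uIcc t₀ t, ‖φ' s - φ' t₀‖ ≤ M * |t - t₀| := fun s hs =>
    (convex_univ.norm_image_sub_le_of_norm_hasDerivWithin_le
      (fun r _ => (hφ' r).hasDerivWithinAt) (fun r _ => hM r) trivial trivial).trans
      (mul_le_mul_of_nonneg_left (abs_sub_left_of_mem_uIcc hs) ((norm_nonneg _).trans (hM t)))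
  have hrem : ∀ s ∈ uIcc t₀ t, HasDerivWithinAt (fun r => φ r - (r - t₀) • φ' t₀)
      (φ' s - φ' t₀) (uIcc t₀ t) s := fun s _ =>
    (((hφ s).sub (((hasDerivAt_id' s).sub_const t₀).smul_const (φ' t₀))).congr_deriv
      (by simp)).hasDerivWithinAt
  have := (convex_uIcc t₀ t).norm_image_sub_le_of_norm_hasDerivWithin_le hrem hlip
    left_mem_uIcc right_mem_uIcc
  calc ‖φ t - φ t₀ - (t - t₀) • φ' t₀‖ ≤ M * |t - t₀| * ‖t - t₀‖ := by
        simpa [sub_right_comm] using this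
    _ = M * (t - t₀) ^ 2 := by rw [Real.norm_eq_abs, mul_assoc, ← sq, sq_abs]

lemma _root_.HasDerivAt.complexCLM_apply {F G : Type*} [NormedAddCommGroup F] [NormedSpace ℂ F]
    [NormedAddCommGroup G] [NormedSpace ℂ G] {c : ℝ → F →L[ℂ] G} {c' : F →L[ℂ] G} {u : ℝ → F}
    {u' : F} {x : ℝ} (hc : HasDerivAt c c' x) (hu : HasDerivAt u u' x) :
    HasDerivAt (fun y => c y (u y)) (c' (u x) + c x u') x :=
  ((ContinuousLinearMap.restrictScalarsL ℂ F G ℝ ℝ).hasFDerivAt.comp_hasDerivAt x hc).clm_apply hu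

lemma contDiff_two_of_hasDerivAt {F : Type*} [NormedAddCommGroup F] [NormedSpace ℝ F]
    {w w' w'' : ℝ → F} (hw : ∀ t, HasDerivAt w (w' t) t) (hw' : ∀ t, HasDerivAt w' (w'' t) t)
    (hw'' : Continuous w'') : ContDiff ℝ 2 w := by
  have hderiv : deriv w = w' := funext fun t => (hw t).deriv
  have hderiv' : deriv w' = w'' := funext fun t => (hw' t).deriv
  rw [show (2 : WithTop ℕ∞) = 1 + 1 from rfl, contDiff_succ_iff_deriv, hderiv,
    contDiff_one_iff_deriv, hderiv']
  exact ⟨fun t => (hw t).differentiableAt, by simp, fun t => (hw' t).differentiableAt, hw''⟩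

section HalfLine

variable {F : Type*} [NormedAddCommGroup F] [NormedSpace ℝ F] {g : ℝ → F}

lemma setIntegral_Iic_eq_intervalIntegral (hg : Integrable g) {a : ℝ} (hga : ∀ s < a, g s = 0)
    (t : ℝ) : ∫ s in Iic t, g s = ∫ s in a..t, g s := by
  rw [← intervalIntegral.integral_Iic_sub_Iic hg.integrableOn hg.integrableOn,
    integral_Iic_eq_integral_Iio (x := a),
    setIntegral_eq_zero_of_forall_eq_zero fun s (hs : s ∈ Iio a) => hga s hs, sub_zero]

lemma setIntegral_Ici_eq_intervalIntegral (hg : Integrable g) {b : ℝ} (hgb : ∀ s > b, g s = 0)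
    (t : ℝ) : ∫ s in Ici t, g s = ∫ s in t..b, g s := by
  rw [← intervalIntegral.integral_Ici_sub_Ici' hg.integrableOn hg.integrableOn,
    integral_Ici_eq_integral_Ioi (x := b),
    setIntegral_eq_zero_of_forall_eq_zero fun s (hs : s ∈ Ioi b) => hgb s hs, sub_zero]

end HalfLine

section CFC

variable {𝒜 : Type*} [CStarAlgebra 𝒜] {a : 𝒜}

open Asymptotics in
lemma hasDerivAt_cfc_of_hasDerivAt {f f' f'' : ℝ → ℝ → ℝ} {M t₀ : ℝ}
    (hf : ∀ x ∈ spectrum ℝ a, ∀ t, HasDerivAt (f · x) (f' t x) t)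
    (hf' : ∀ x ∈ spectrum ℝ a, ∀ t, HasDerivAt (f' · x) (f'' t x) t)
    (hM : ∀ x ∈ spectrum ℝ a, ∀ t, |f'' t x| ≤ M)
    (hcont : ∀ t, ContinuousOn (f t) (spectrum ℝ a))
    (hcont' : ContinuousOn (f' t₀) (spectrum ℝ a)) :
    HasDerivAt (fun t => cfc (f t) a) (cfc (f' t₀) a) t₀ := by
  rw [hasDerivAt_iff_isLittleO]
  refine IsBigO.trans_isLittleO (IsBigO.of_bound |M| (Filter.Eventually.of_forall fun t => ?_))
    (isLittleO_pow_sub_sub t₀ one_lt_two)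
  rw [← cfc_sub .., ← cfc_smul .., ← cfc_sub ..]
  refine norm_cfc_le (by positivity) fun x hx => ?_
  calc ‖f t x - f t₀ x - (t - t₀) • f' t₀ x‖ ≤ M * (t - t₀) ^ 2 :=
        norm_sub_sub_smul_le_of_hasDerivAt (hf x hx) (hf' x hx) (hM x hx) t₀ t
    _ ≤ |M| * ‖‖t - t₀‖ ^ 2‖ := by
        rw [norm_pow, norm_norm, Real.norm_eq_abs, sq_abs]
        exact mul_le_mul_of_nonneg_right (le_abs_self M) (sq_nonneg _)

lemma le_norm_of_mem_spectrum {x : ℝ} (hx : x ∈ spectrum ℝ a)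
    (ha : IsSelfAdjoint a := by cfc_tac) : x ≤ ‖a‖ := by
  have h := norm_apply_le_norm_cfc (fun x : ℝ => x) a hx (ha := ha)
  rw [cfc_id' ℝ a ha, Real.norm_eq_abs] at h
  exact (le_abs_self x).trans h

lemma cfc_id_mul (f : ℝ → ℝ) (hf : ContinuousOn f (spectrum ℝ a) := by cfc_cont_tac)
    (ha : IsSelfAdjoint a := by cfc_tac) : cfc (fun x => x * f x) a = a * cfc f a := by
  rw [cfc_mul (fun x : ℝ => x) f a, cfc_id' ℝ a ha]

end CFC

/-- Agrees with the kernel `sin (t √x) / √x` of the statement on `[0, ∞)` (`sinKernel_eqOn`) and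
is continuous on `ℝ`, so `fun_prop` discharges the continuity side conditions of `cfc`. -/
noncomputable def sinKernel (t x : ℝ) : ℝ := t * sinc (t * √x)

noncomputable def cosKernel (t x : ℝ) : ℝ := cos (t * √x)

@[fun_prop]
lemma continuous_sinKernel (t : ℝ) : Continuous (sinKernel t) := by
  unfold sinKernel; fun_prop

@[fun_prop]
lemma continuous_cosKernel (t : ℝ) : Continuous (cosKernel t) := by
  unfold cosKernel; fun_prop

lemma sqrt_mul_sinKernel (t x : ℝ) : √x * sinKernel t x = sin (t * √x) := by
  rw [sinKernel, ← mul_sinc]; ring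

lemma mul_sinKernel {x : ℝ} (hx : 0 ≤ x) (t : ℝ) : x * sinKernel t x = √x * sin (t * √x) := by
  rw [← sqrt_mul_sinKernel, ← mul_assoc, Real.mul_self_sqrt hx]

lemma sinKernel_eqOn (t : ℝ) :
    EqOn (fun x => if x = 0 then t else sin (t * √x) / √x) (sinKernel t) (Ici 0) := by
  intro x hx
  rcases eq_or_ne x 0 with rfl | hx0
  · simp [sinKernel]
  · have hsqrt : √x ≠ 0 := Real.sqrt_ne_zero'.mpr (lt_of_le_of_ne hx (Ne.symm hx0))
    simp only [if_neg hx0]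
    rw [← sqrt_mul_sinKernel, mul_div_cancel_left₀ _ hsqrt]

lemma sinKernel_sub (t s x : ℝ) :
    sinKernel (t - s) x = sinKernel t x * cosKernel s x - cosKernel t x * sinKernel s x := by
  rcases eq_or_ne √x 0 with hx | hx
  · simp [sinKernel, cosKernel, hx]
  · refine mul_left_cancel₀ hx ?_
    have h := sqrt_mul_sinKernel (t - s) x
    rw [sub_mul, sin_sub] at h
    simp only [cosKernel]
    linear_combination h - cos (s * √x) * sqrt_mul_sinKernel t x
      + cos (t * √x) * sqrt_mul_sinKernel s x

lemma cosKernel_sq_add_mul_sinKernel_sq {x : ℝ} (hx : 0 ≤ x) (t : ℝ) :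
    cosKernel t x ^ 2 + x * sinKernel t x ^ 2 = 1 := by
  have h := sqrt_mul_sinKernel t x
  have hsq := Real.sq_sqrt hx
  simp only [cosKernel]
  linear_combination sin_sq_add_cos_sq (t * √x) + (√x * sinKernel t x + sin (t * √x)) * h
    - sinKernel t x ^ 2 * hsq

lemma hasDerivAt_sinKernel (x t : ℝ) : HasDerivAt (sinKernel · x) (cosKernel t x) t := by
  rcases eq_or_ne √x 0 with hx | hx
  · simpa [sinKernel, cosKernel, hx] using hasDerivAt_id' t
  · have h : (sinKernel · x) = fun t => sin (t * √x) / √x := by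
      funext t; rw [← sqrt_mul_sinKernel, mul_div_cancel_left₀ _ hx]
    rw [h, cosKernel]
    exact ((hasDerivAt_mul_const √x).sin.div_const √x).congr_deriv (by field_simp)

lemma hasDerivAt_cosKernel {x : ℝ} (hx : 0 ≤ x) (t : ℝ) :
    HasDerivAt (cosKernel · x) (-(x * sinKernel t x)) t := by
  rw [mul_sinKernel hx]
  exact (hasDerivAt_mul_const (x := t) √x).cos.congr_deriv (by ring)

section CFCKernels

variable {𝒜 : Type*} [CStarAlgebra 𝒜] {a : 𝒜}

lemma cfc_sinKernel_sub (t s : ℝ) :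
    cfc (sinKernel (t - s)) a
      = cfc (sinKernel t) a * cfc (cosKernel s) a - cfc (cosKernel t) a * cfc (sinKernel s) a := by
  rw [← cfc_mul .., ← cfc_mul .., ← cfc_sub ..]
  exact cfc_congr fun x _ => sinKernel_sub t s x

variable [PartialOrder 𝒜] [StarOrderedRing 𝒜]

lemma cfc_cosKernel_mul_self_add (ha : 0 ≤ a) (t : ℝ) :
    cfc (cosKernel t) a * cfc (cosKernel t) a + a * (cfc (sinKernel t) a * cfc (sinKernel t) a)
      = 1 := by
  rw [← cfc_mul .., ← cfc_mul .., ← cfc_id_mul (fun x => sinKernel t x * sinKernel t x),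
    ← cfc_add .., ← cfc_const_one ℝ a]
  refine cfc_congr fun x hx => ?_
  linear_combination cosKernel_sq_add_mul_sinKernel_sq (spectrum_nonneg_of_nonneg ha hx) t

lemma hasDerivAt_cfc_sinKernel (ha : 0 ≤ a) (t : ℝ) :
    HasDerivAt (fun t => cfc (sinKernel t) a) (cfc (cosKernel t) a) t := by
  refine hasDerivAt_cfc_of_hasDerivAt (M := √‖a‖) (f'' := fun t x => -(x * sinKernel t x))
    (fun x _ t => hasDerivAt_sinKernel x t)
    (fun x hx t => hasDerivAt_cosKernel (spectrum_nonneg_of_nonneg ha hx) t)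
    (fun x hx t => ?_) (fun t => by fun_prop) (by fun_prop)
  have hx0 := spectrum_nonneg_of_nonneg ha hx
  rw [abs_neg, mul_sinKernel hx0, abs_mul, abs_of_nonneg (Real.sqrt_nonneg x)]
  exact (mul_le_of_le_one_right (Real.sqrt_nonneg x) (abs_sin_le_one _)).trans
    (Real.sqrt_le_sqrt (le_norm_of_mem_spectrum hx))

lemma hasDerivAt_cfc_cosKernel (ha : 0 ≤ a) (t : ℝ) :
    HasDerivAt (fun t => cfc (cosKernel t) a) (-(a * cfc (sinKernel t) a)) t := by
  have h := hasDerivAt_cfc_of_hasDerivAt (M := ‖a‖) (f'' := fun t x => -(x * cosKernel t x))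
    (fun x hx t => hasDerivAt_cosKernel (spectrum_nonneg_of_nonneg ha hx) t)
    (fun x _ t => ((hasDerivAt_sinKernel x t).const_mul x).neg) (fun x hx t => ?_)
    (fun t => by fun_prop) (by fun_prop) (t₀ := t)
  · rwa [cfc_neg .., cfc_id_mul (sinKernel t)] at h
  rw [abs_neg, abs_mul, abs_of_nonneg (spectrum_nonneg_of_nonneg ha hx)]
  exact (mul_le_of_le_one_right (spectrum_nonneg_of_nonneg ha hx) (abs_cos_le_one _)).trans
    (le_norm_of_mem_spectrum hx)

end CFCKernels

section Duhamel

variable {E : Type*} [NormedAddCommGroup E] [NormedSpace ℂ E]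

structure IsSineCosinePair (A : E →L[ℂ] E) (S C : ℝ → E →L[ℂ] E) : Prop where
  hasDerivAt_sin : ∀ t, HasDerivAt S (C t) t
  hasDerivAt_cos : ∀ t, HasDerivAt C (-(A * S t)) t
  sin_sub : ∀ t s, S (t - s) = S t * C s - C t * S s
  commute : ∀ t, Commute (S t) (C t)
  cos_mul_self_add : ∀ t, C t * C t + A * (S t * S t) = 1

noncomputable def duhamel (S : ℝ → E →L[ℂ] E) (f : ℝ → E) (a t : ℝ) : E :=
  ∫ s in a..t, S (t - s) (f s)

variable {A : E →L[ℂ] E} {S C : ℝ → E →L[ℂ] E} {f : ℝ → E}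

lemma setIntegral_apply_sub_eq_zero (hS : S 0 = 0) {U : Set ℝ} {t : ℝ}
    (hU : ∀ s ∈ U, s ∈ tsupport f → s = t) : ∫ s in U, S (t - s) (f s) = 0 := by
  refine setIntegral_eq_zero_of_forall_eq_zero fun s hs => ?_
  by_cases hsf : s ∈ tsupport f
  · rw [hU s hs hsf, sub_self, hS, zero_apply]
  · rw [image_eq_zero_of_notMem_tsupport hsf, map_zero]

lemma integrable_apply_sub (hS : Continuous S) (hf : Continuous f) (hfc : HasCompactSupport f)
    (t : ℝ) : Integrable fun s => S (t - s) (f s) :=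
  ((hS.comp (continuous_const.sub continuous_id)).clm_apply hf).integrable_of_hasCompactSupport
    (hfc.mono fun s hs h0 => hs (by simp [h0]))

lemma setIntegral_Iic_eq_duhamel (hS : Continuous S) (hf : Continuous f)
    (hfc : HasCompactSupport f) {a : ℝ} (ha : a ∈ lowerBounds (tsupport f)) (t : ℝ) :
    ∫ s in Iic t, S (t - s) (f s) = duhamel S f a t :=
  setIntegral_Iic_eq_intervalIntegral (integrable_apply_sub hS hf hfc t) (fun s hs => by
    rw [image_eq_zero_of_notMem_tsupport fun h => (ha h).not_gt hs, map_zero]) t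

lemma neg_setIntegral_Ici_eq_duhamel (hS : Continuous S) (hf : Continuous f)
    (hfc : HasCompactSupport f) {b : ℝ} (hb : b ∈ upperBounds (tsupport f)) (t : ℝ) :
    -∫ s in Ici t, S (t - s) (f s) = duhamel S f b t := by
  rw [setIntegral_Ici_eq_intervalIntegral (integrable_apply_sub hS hf hfc t) (fun s hs => by
    rw [image_eq_zero_of_notMem_tsupport fun h => (hb h).not_gt hs, map_zero]) t,
    intervalIntegral.integral_symm, neg_neg, duhamel]

namespace IsSineCosinePair

lemma sin_zero (h : IsSineCosinePair A S C) : S 0 = 0 := by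
  simpa [(h.commute 0).eq] using h.sin_sub 0 0

lemma continuous_sin (h : IsSineCosinePair A S C) : Continuous S :=
  continuous_iff_continuousAt.mpr fun t => (h.hasDerivAt_sin t).continuousAt

lemma continuous_cos (h : IsSineCosinePair A S C) : Continuous C :=
  continuous_iff_continuousAt.mpr fun t => (h.hasDerivAt_cos t).continuousAt

variable [CompleteSpace E]

lemma duhamel_eq (h : IsSineCosinePair A S C) (hf : Continuous f) (a : ℝ) :
    duhamel S f a = fun t => S t (∫ s in a..t, C s (f s)) - C t (∫ s in a..t, S s (f s)) := by
  funext t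
  have hSf : Continuous fun s => S s (f s) := h.continuous_sin.clm_apply hf
  have hCf : Continuous fun s => C s (f s) := h.continuous_cos.clm_apply hf
  rw [← (S t).intervalIntegral_comp_comm (hCf.intervalIntegrable a t),
    ← (C t).intervalIntegral_comp_comm (hSf.intervalIntegrable a t),
    ← intervalIntegral.integral_sub ((continuous_const.clm_apply hCf).intervalIntegrable a t)
      ((continuous_const.clm_apply hSf).intervalIntegrable a t)]
  refine intervalIntegral.integral_congr fun s _ => ?_
  simp [h.sin_sub t s]

lemma hasDerivAt_duhamel (h : IsSineCosinePair A S C) (hf : Continuous f) (a t : ℝ) :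
    HasDerivAt (duhamel S f a)
      (C t (∫ s in a..t, C s (f s)) + A (S t (∫ s in a..t, S s (f s)))) t := by
  have hSf : Continuous fun s => S s (f s) := h.continuous_sin.clm_apply hf
  have hCf : Continuous fun s => C s (f s) := h.continuous_cos.clm_apply hf
  have hcomm : S t (C t (f t)) = C t (S t (f t)) := congrArg (· (f t)) (h.commute t).eq
  rw [h.duhamel_eq hf a]
  refine (((h.hasDerivAt_sin t).complexCLM_apply
    (hCf.integral_hasStrictDerivAt a t).hasDerivAt).sub
    ((h.hasDerivAt_cos t).complexCLM_apply
      (hSf.integral_hasStrictDerivAt a t).hasDerivAt)).congr_deriv ?_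
  simp only [hcomm, neg_apply, mul_apply_eq_comp]
  abel

lemma hasDerivAt_deriv_duhamel (h : IsSineCosinePair A S C) (hf : Continuous f) (a t : ℝ) :
    HasDerivAt (fun t => C t (∫ s in a..t, C s (f s)) + A (S t (∫ s in a..t, S s (f s))))
      (f t - A (duhamel S f a t)) t := by
  have hSf : Continuous fun s => S s (f s) := h.continuous_sin.clm_apply hf
  have hCf : Continuous fun s => C s (f s) := h.continuous_cos.clm_apply hf
  have hpyth : C t (C t (f t)) + A (S t (S t (f t))) = f t := by
    simpa [mul_apply_eq_comp] using congrArg (· (f t)) (h.cos_mul_self_add t)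
  refine (((h.hasDerivAt_cos t).complexCLM_apply
    (hCf.integral_hasStrictDerivAt a t).hasDerivAt).add
    ((A.restrictScalars ℝ).hasFDerivAt.comp_hasDerivAt t ((h.hasDerivAt_sin t).complexCLM_apply
      (hSf.integral_hasStrictDerivAt a t).hasDerivAt))).congr_deriv ?_
  rw [h.duhamel_eq hf a]
  simp only [neg_apply, mul_apply_eq_comp, map_add, map_sub,
    ContinuousLinearMap.coe_restrictScalars']
  linear_combination (norm := module) hpyth

theorem duhamel_solves (h : IsSineCosinePair A S C) (hf : Continuous f) (a : ℝ) :
    ContDiff ℝ 2 (duhamel S f a) ∧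
      ∀ t, deriv (deriv (duhamel S f a)) t + A (duhamel S f a t) = f t := by
  have hw := h.hasDerivAt_duhamel hf a
  have hw' := h.hasDerivAt_deriv_duhamel hf a
  have hcont : Continuous (duhamel S f a) :=
    continuous_iff_continuousAt.mpr fun t => (hw t).continuousAt
  refine ⟨contDiff_two_of_hasDerivAt hw hw' (hf.sub (A.continuous.comp hcont)), fun t => ?_⟩
  rw [funext fun t => (hw t).deriv, (hw' t).deriv, sub_add_cancel]

end IsSineCosinePair

end Duhamel

lemma isSineCosinePair_cfc {H : Type*} [NormedAddCommGroup H] [InnerProductSpace ℂ H]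
    [CompleteSpace H] {A : H →L[ℂ] H} (hA : 0 ≤ A) :
    IsSineCosinePair A (fun t => cfc (sinKernel t) A) (fun t => cfc (cosKernel t) A) where
  hasDerivAt_sin := hasDerivAt_cfc_sinKernel hA
  hasDerivAt_cos := hasDerivAt_cfc_cosKernel hA
  sin_sub := cfc_sinKernel_sub
  commute _ := cfc_commute_cfc _ _ _
  cos_mul_self_add := cfc_cosKernel_mul_self_add hA

end AbstractWave

open AbstractWave

/-- Duhamel construction of the retarded and advanced fundamental solutions for the
abstract wave equation `u″ + A u = f` with positive bounded self-adjoint `A`: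
the retarded solution `u(t) = ∫_{s ≤ t} S(t−s) f(s) ds` and the advanced solution
`v(t) = −∫_{s ≥ t} S(t−s) f(s) ds` are `C²`, solve the inhomogeneous equation, and
vanish respectively in the past and in the future of the support of `f`. -/
theorem abstract_wave_retarded_advanced {H : Type*} [NormedAddCommGroup H]
    [InnerProductSpace ℂ H] [CompleteSpace H]
    (A : H →L[ℂ] H) (hA : IsSelfAdjoint A) (hpos : ∀ u : H, 0 ≤ (⟪A u, u⟫_ℂ).re)
    (S : ℝ → H →L[ℂ] H)
    (hS : ∀ t : ℝ, S t = cfc (fun x : ℝ =>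
      if x = 0 then t else Real.sin (t * Real.sqrt x) / Real.sqrt x) A)
    (f : ℝ → H) (hf : Continuous f) (hfc : HasCompactSupport f)
    (u v : ℝ → H)
    (hu : ∀ t : ℝ, u t = ∫ s in Set.Iic t, (S (t - s)) (f s))
    (hv : ∀ t : ℝ, v t = -∫ s in Set.Ici t, (S (t - s)) (f s)) :
    (ContDiff ℝ 2 u ∧ (∀ t : ℝ, deriv (deriv u) t + A (u t) = f t) ∧
      (∀ t : ℝ, (∀ s ∈ tsupport f, t ≤ s) → u t = 0)) ∧
    (ContDiff ℝ 2 v ∧ (∀ t : ℝ, deriv (deriv v) t + A (v t) = f t) ∧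
      (∀ t : ℝ, (∀ s ∈ tsupport f, s ≤ t) → v t = 0)) := by
  have hA0 : 0 ≤ A := (ContinuousLinearMap.nonneg_iff_isPositive A).mpr
    (ContinuousLinearMap.isPositive_def'.mpr ⟨hA, hpos⟩)
  have hS' : S = fun t => cfc (sinKernel t) A := funext fun t => (hS t).trans <|
    cfc_congr <| (sinKernel_eqOn t).mono fun _ hx => spectrum_nonneg_of_nonneg hA0 hx
  have hpair : IsSineCosinePair A S fun t => cfc (cosKernel t) A :=
    hS' ▸ isSineCosinePair_cfc hA0
  obtain ⟨a, ha⟩ := hfc.isCompact.bddBelow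
  obtain ⟨b, hb⟩ := hfc.isCompact.bddAbove
  have hu' : u = duhamel S f a := funext fun t =>
    (hu t).trans (setIntegral_Iic_eq_duhamel hpair.continuous_sin hf hfc ha t)
  have hv' : v = duhamel S f b := funext fun t =>
    (hv t).trans (neg_setIntegral_Ici_eq_duhamel hpair.continuous_sin hf hfc hb t)
  subst hu' hv'
  refine ⟨⟨(hpair.duhamel_solves hf a).1, (hpair.duhamel_solves hf a).2, fun t ht => ?_⟩,
    ⟨(hpair.duhamel_solves hf b).1, (hpair.duhamel_solves hf b).2, fun t ht => ?_⟩⟩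
  · rw [hu t]
    exact setIntegral_apply_sub_eq_zero hpair.sin_zero fun s hs hsf => le_antisymm hs (ht s hsf)
  · rw [hv t, neg_eq_zero]
    exact setIntegral_apply_sub_eq_zero hpair.sin_zero fun s hs hsf => le_antisymm (ht s hsf) hs
end

section
/- Let H be a complex Hilbert space and A : H →L[ℂ] H a bounded self-adjoint operator with 0 ≤ re⟪A u, u⟫ for all u ∈ H, and let f : ℝ → H be continuous with compact support. If u, v : ℝ → H are both twice differentiable, satisfy u″(t) + A (u t) = f t and v″(t) + A (v t) = f t for all t ∈ ℝ, and there exists T ∈ ℝ with u t = 0 and v t = 0 for all t ≤ T, then u = v. -/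
open scoped InnerProductSpace

/-- Uniqueness of the retarded solution for the abstract wave equation `u″ + A u = f`
with positive bounded self-adjoint `A`: two twice differentiable solutions with the same
source which both vanish sufficiently far in the past coincide. -/
theorem abstract_wave_retarded_uniqueness {H : Type*} [NormedAddCommGroup H]
    [InnerProductSpace ℂ H] [CompleteSpace H]
    (A : H →L[ℂ] H) (hA : IsSelfAdjoint A) (hpos : ∀ w : H, 0 ≤ (⟪A w, w⟫_ℂ).re)
    (f : ℝ → H) (hf : Continuous f) (hfc : HasCompactSupport f)
    (u v : ℝ → H)
    (hu : Differentiable ℝ u) (hu' : Differentiable ℝ (deriv u))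
    (hv : Differentiable ℝ v) (hv' : Differentiable ℝ (deriv v))
    (hequ : ∀ t : ℝ, deriv (deriv u) t + A (u t) = f t)
    (heqv : ∀ t : ℝ, deriv (deriv v) t + A (v t) = f t)
    (T : ℝ) (hpastu : ∀ t : ℝ, t ≤ T → u t = 0) (hpastv : ∀ t : ℝ, t ≤ T → v t = 0) :
    u = v := by
  letI : InnerProductSpace ℝ H := InnerProductSpace.complexToReal
  set w : ℝ → H := fun t => u t - v t with hwdef
  have hwdiff : Differentiable ℝ w := hu.sub hv
  have hdw : deriv w = fun t => deriv u t - deriv v t := by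
    funext t; exact deriv_sub (hu t) (hv t)
  have hdwdiff : Differentiable ℝ (deriv w) := by
    rw [hdw]; exact hu'.sub hv'
  have hddw : ∀ t, deriv (deriv w) t = -(A (w t)) := by
    intro t
    rw [hdw]
    have h0 : deriv (fun s => deriv u s - deriv v s) t
        = deriv (deriv u) t - deriv (deriv v) t := deriv_sub (hu' t) (hv' t)
    have h1 : deriv (deriv u) t = f t - A (u t) := eq_sub_of_add_eq (hequ t)
    have h2 : deriv (deriv v) t = f t - A (v t) := eq_sub_of_add_eq (heqv t)
    rw [h0, h1, h2, hwdef]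
    simp [map_sub]
  -- symmetry of A in the real inner product
  have hsym : ∀ x y : H, ⟪A x, y⟫_ℝ = ⟪A y, x⟫_ℝ := by
    intro x y
    have hS : (A : H →ₗ[ℂ] H).IsSymmetric :=
      ContinuousLinearMap.isSelfAdjoint_iff_isSymmetric.mp hA
    have := hS x y
    calc ⟪A x, y⟫_ℝ = (⟪A x, y⟫_ℂ).re := rfl
      _ = (⟪x, A y⟫_ℂ).re := congrArg Complex.re this
      _ = (⟪A y, x⟫_ℂ).re := by rw [← inner_conj_symm]; exact Complex.conj_re _
      _ = ⟪A y, x⟫_ℝ := rfl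
  set E : ℝ → ℝ := fun t => ⟪deriv w t, deriv w t⟫_ℝ + ⟪A (w t), w t⟫_ℝ with hEdef
  have hEderiv : ∀ t, HasDerivAt E 0 t := by
    intro t
    have hw' : HasDerivAt w (deriv w t) t := (hwdiff t).hasDerivAt
    have hw'' : HasDerivAt (deriv w) (-(A (w t))) t := by
      have := (hdwdiff t).hasDerivAt; rwa [hddw t] at this
    have hAw : HasDerivAt (fun s => A (w s)) (A (deriv w t)) t :=
      (A.restrictScalars ℝ).hasFDerivAt.comp_hasDerivAt t hw'
    have h1 := hw''.inner ℝ hw''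
    have h2 := hAw.inner ℝ hw'
    have h := h1.add h2
    have hval : (⟪deriv w t, -(A (w t))⟫_ℝ + ⟪-(A (w t)), deriv w t⟫_ℝ)
        + (⟪A (w t), deriv w t⟫_ℝ + ⟪A (deriv w t), w t⟫_ℝ) = 0 := by
      simp only [inner_neg_left, inner_neg_right]
      rw [hsym (deriv w t) (w t), real_inner_comm (deriv w t) (A (w t))]
      ring
    rw [hval] at h
    exact h
  have hEconst : ∀ t : ℝ, E t = E (T - 1) := fun t =>
    is_const_of_deriv_eq_zero (fun s => (hEderiv s).differentiableAt)
      (fun s => (hEderiv s).deriv) t (T - 1)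
  have hwzero_near : w =ᶠ[nhds (T - 1)] 0 := by
    filter_upwards [Iio_mem_nhds (show T - 1 < T by linarith)] with t ht
    simp only [hwdef, Pi.zero_apply]
    rw [hpastu t (le_of_lt ht), hpastv t (le_of_lt ht), sub_zero]
  have hwT : w (T - 1) = 0 := hwzero_near.eq_of_nhds
  have hdwT : deriv w (T - 1) = 0 := by
    rw [hwzero_near.deriv_eq]; exact deriv_const _ _
  have hET : E (T - 1) = 0 := by
    simp [hEdef, hdwT, hwT]
  have hdw_zero : ∀ t, deriv w t = 0 := by
    intro t
    have hE0 : E t = 0 := (hEconst t).trans hET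
    have h1 : (0 : ℝ) ≤ ⟪deriv w t, deriv w t⟫_ℝ := real_inner_self_nonneg
    have h2 : (0 : ℝ) ≤ ⟪A (w t), w t⟫_ℝ := hpos (w t)
    have : ⟪deriv w t, deriv w t⟫_ℝ = 0 := by
      have := hE0
      simp only [hEdef] at this
      linarith
    exact inner_self_eq_zero.mp this
  have hwzero : ∀ t, w t = 0 := by
    intro t
    have := is_const_of_deriv_eq_zero hwdiff hdw_zero t (T - 1)
    rw [this, hwT]
  funext t
  have := hwzero t
  simp only [hwdef] at this
  exact sub_eq_zero.mp this
end

section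
/- Let H be a complex Hilbert space and A : H →L[ℂ] H a bounded self-adjoint operator whose spectrum is contained in [c, ∞) for some c > 0. For s ∈ ℝ let K s be the operator obtained by applying the continuous functional calculus for A to the continuous function x ↦ exp(−i·s·√x)/(2√x) on [c,∞). For continuous compactly supported f₁, f₂ : ℝ → H define λ₂(f₁, f₂) := ∫∫ ⟪f₁ t, (K (t − t′)) (f₂ t′)⟫ dt′ dt (inner product conjugate-linear in the first slot, Bochner integrals). Then for every continuous compactly supported f : ℝ → H, the complex number λ₂(f, f) has zero imaginary part and nonnegative real part. -/
/-!
The kernel factors through the functional calculus as `K (t - t') = B(t)† B(t')` with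
`B(t) = e^{i t √A} (2 √A)^{-1/2}`, because `e^{-i(t-t')x}/(2x) = conj (g_t x) · g_{t'} x` for
`g_t x = e^{i t x} (2x)^{-1/2}`. Hence `λ₂(f, f) = ∫∫ ⟪B(t) f(t), B(t') f(t')⟫ = ‖∫ B(t) f(t) dt‖²`;
integrability holds because `t ↦ B(t)` is norm-continuous, by uniform continuity of
`(t, x) ↦ g_t x` on compact sets.
-/

open scoped InnerProductSpace
open MeasureTheory

open Filter Set Function in
theorem continuous_cfc_of_continuousOn_uncurry {X R A : Type*} {p : A → Prop} [CommSemiring R]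
    [StarRing R] [MetricSpace R] [IsTopologicalSemiring R] [ContinuousStar R] [TopologicalSpace X]
    [Ring A] [StarRing A] [TopologicalSpace A] [Algebra R A] [ContinuousFunctionalCalculus R A p]
    {g : X → R → R} {a : A} (hg : ContinuousOn (uncurry g) (univ ×ˢ spectrum R a)) :
    Continuous fun x ↦ cfc (g x) a := by
  refine continuous_iff_continuousAt.mpr fun x₀ ↦ continuousAt_cfc_fun (fun u hu ↦ ?_) ?_
  · obtain ⟨v, hv, hvu⟩ := (ContinuousFunctionalCalculus.isCompact_spectrum a).mem_uniformity_of_prod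
      hg (mem_univ x₀) (symm_le_uniformity hu)
    rw [nhdsWithin_univ] at hv
    exact mem_of_superset hv fun x hx z hz ↦ hvu x hx z hz
  · exact Eventually.of_forall fun x ↦ hg.uncurry_left x (mem_univ x)

theorem integral_integral_inner_star_mul_apply {α 𝕜 E : Type*} [RCLike 𝕜] [NormedAddCommGroup E]
    [InnerProductSpace 𝕜 E] [CompleteSpace E] [NormedSpace ℝ E] [MeasurableSpace α] {μ : Measure α}
    {B : α → E →L[𝕜] E} {f : α → E} (h : Integrable (fun t ↦ B t (f t)) μ) :
    ∫ t, ∫ t', ⟪f t, (star (B t) * B t') (f t')⟫_𝕜 ∂μ ∂μ =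
      ((‖∫ t, B t (f t) ∂μ‖ ^ 2 : ℝ) : 𝕜) := by
  set v := ∫ t, B t (f t) ∂μ
  calc ∫ t, ∫ t', ⟪f t, (star (B t) * B t') (f t')⟫_𝕜 ∂μ ∂μ
      = ∫ t, ⟪B t (f t), v⟫_𝕜 ∂μ := by
        simp only [mul_apply_eq_comp, ContinuousLinearMap.star_eq_adjoint,
          ContinuousLinearMap.adjoint_inner_right, integral_inner h, v]
    _ = ∫ t, (starRingEnd 𝕜) ⟪v, B t (f t)⟫_𝕜 ∂μ := by simp only [inner_conj_symm]
    _ = (starRingEnd 𝕜) ⟪v, v⟫_𝕜 := by rw [integral_conj, integral_inner h]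
    _ = ((‖v‖ ^ 2 : ℝ) : 𝕜) := by rw [inner_self_eq_norm_sq_to_K]; simp

noncomputable def twoPointKernelRoot (t : ℝ) (z : ℂ) : ℂ :=
  Complex.exp (Complex.I * t * Real.sqrt z.re) * ((Real.sqrt (2 * Real.sqrt z.re) : ℝ) : ℂ)⁻¹

theorem star_twoPointKernelRoot_mul_twoPointKernelRoot (t t' : ℝ) (z : ℂ) :
    star (twoPointKernelRoot t z) * twoPointKernelRoot t' z =
      Complex.exp (-(Complex.I * ((t - t' : ℝ) : ℂ) * Real.sqrt z.re)) / (2 * Real.sqrt z.re) := by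
  have hsq : Real.sqrt (2 * Real.sqrt z.re) * Real.sqrt (2 * Real.sqrt z.re) = 2 * Real.sqrt z.re :=
    Real.mul_self_sqrt (by positivity)
  simp only [twoPointKernelRoot, star_mul', Complex.star_def, ← Complex.exp_conj, map_mul,
    map_inv₀, Complex.conj_I, Complex.conj_ofReal]
  rw [mul_mul_mul_comm, ← Complex.exp_add, ← mul_inv, ← Complex.ofReal_mul, hsq, div_eq_mul_inv]
  push_cast
  ring_nf

theorem continuousOn_twoPointKernelRoot :
    ContinuousOn (Function.uncurry twoPointKernelRoot) (Set.univ ×ˢ {z : ℂ | 0 < z.re}) := by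
  refine Continuous.continuousOn (by fun_prop) |>.mul
    (Continuous.continuousOn (by fun_prop) |>.inv₀ fun p hp ↦ ?_)
  have : 0 < Real.sqrt (2 * Real.sqrt p.2.re) := by
    have : 0 < Real.sqrt p.2.re := Real.sqrt_pos.mpr hp.2
    positivity
  exact_mod_cast this.ne'

/-- Positivity of the ground-state two-point function: for a bounded self-adjoint
operator `A` with spectrum in `[c, ∞)`, `c > 0`, and kernel
`K s = e^{−i s √A}/(2√A)` given by the continuous functional calculus, the pairing
`λ₂(f, f) = ∫∫ ⟪f t, K(t−t′) f t′⟫ dt′ dt` is real and nonnegative. -/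
theorem ground_state_two_point_positive {H : Type*} [NormedAddCommGroup H]
    [InnerProductSpace ℂ H] [CompleteSpace H]
    (A : H →L[ℂ] H) (hA : IsSelfAdjoint A) (c : ℝ) (hc : 0 < c)
    (hspec : spectrum ℝ A ⊆ Set.Ici c)
    (K : ℝ → H →L[ℂ] H)
    (hK : ∀ s : ℝ, K s = cfc (fun z : ℂ =>
      Complex.exp (-(Complex.I * (s : ℂ) * (Real.sqrt z.re : ℂ)))
        / (2 * (Real.sqrt z.re : ℂ))) A)
    (f : ℝ → H) (hf : Continuous f) (hfc : HasCompactSupport f) :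
    (∫ t : ℝ, ∫ t' : ℝ, ⟪f t, (K (t - t')) (f t')⟫_ℂ).im = 0 ∧
      0 ≤ (∫ t : ℝ, ∫ t' : ℝ, ⟪f t, (K (t - t')) (f t')⟫_ℂ).re := by
  have hpos : spectrum ℂ A ⊆ {z : ℂ | 0 < z.re} := fun z hz ↦
    hc.trans_le (hspec (hA.spectrumRestricts.apply_mem hz))
  have hroot : ContinuousOn (Function.uncurry twoPointKernelRoot) (Set.univ ×ˢ spectrum ℂ A) :=
    continuousOn_twoPointKernelRoot.mono (Set.prod_mono subset_rfl hpos)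
  have hroot_t (t : ℝ) : ContinuousOn (twoPointKernelRoot t) (spectrum ℂ A) :=
    hroot.uncurry_left t (Set.mem_univ t)
  set B : ℝ → H →L[ℂ] H := fun t ↦ cfc (twoPointKernelRoot t) A
  have hfactor (t t' : ℝ) : K (t - t') = star (B t) * B t' := by
    rw [hK, ← cfc_star, ← cfc_mul _ _ A (hroot_t t).star (hroot_t t')]
    exact cfc_congr fun z _ ↦ (star_twoPointKernelRoot_mul_twoPointKernelRoot t t' z).symm
  have hint : Integrable fun t ↦ B t (f t) :=
    ((continuous_cfc_of_continuousOn_uncurry hroot).clm_apply hf).integrable_of_hasCompactSupport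
      (hfc.mono fun t ht hft ↦ ht (by simp [hft]))
  have hnorm : ∫ t, ∫ t', ⟪f t, (K (t - t')) (f t')⟫_ℂ = ((‖∫ t, B t (f t)‖ ^ 2 : ℝ) : ℂ) := by
    simp only [hfactor]
    exact integral_integral_inner_star_mul_apply hint
  rw [hnorm, Complex.ofReal_im, Complex.ofReal_re]
  exact ⟨rfl, by positivity⟩
end

section
/- Let H be a complex Hilbert space and A : H →L[ℂ] H a bounded self-adjoint operator whose spectrum is contained in [c, ∞) for some c > 0. For s ∈ ℝ let K s be the continuous functional calculus of A applied to x ↦ exp(−i·s·√x)/(2√x), let C s := cfc (fun x : ℝ => Real.cos (s * Real.sqrt x) / (2 * Real.sqrt x)) A, and let S s := cfc (fun x : ℝ => Real.sin (s * Real.sqrt x) / Real.sqrt x) A. For continuous compactly supported f₁, f₂ : ℝ → H define λ₂(f₁, f₂) := ∫∫ ⟪f₁ t, (K (t − t′)) (f₂ t′)⟫ dt′ dt, C₂(f₁, f₂) := ∫∫ ⟪f₁ t, (C (t − t′)) (f₂ t′)⟫ dt′ dt, and G₂(f₁, f₂) := ∫∫ ⟪f₁ t, (S (t − t′)) (f₂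 t′)⟫ dt′ dt. Then λ₂(f₁, f₂) = C₂(f₁, f₂) − (i/2)·G₂(f₁, f₂), with C₂(f₁, f₂) = conj (C₂(f₂, f₁)) and G₂(f₁, f₂) = −conj (G₂(f₂, f₁)); hence the Hermitian-antisymmetric part of the two-point function λ₂ equals −(i/2) times the causal propagator pairing G₂. -/
open scoped InnerProductSpace
open MeasureTheory

/-- Pointwise complex kernel identity `e^{-isw}/(2w) = cos(sw)/(2w) - (i/2) sin(sw)/w`,
valid for all `w ≥ 0` (both sides vanish when `w = 0` by junk-value division). -/
lemma two_point_kernel_ptwise (s : ℝ) (w : ℝ) (hw : 0 ≤ w) :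
    Complex.exp (-(Complex.I * (s : ℂ) * (w : ℂ))) / (2 * (w : ℂ))
      = (Real.cos (s * w) : ℂ) / (2 * (w : ℂ))
        - (Complex.I / 2) * ((Real.sin (s * w) : ℂ) / (w : ℂ)) := by
  rcases eq_or_lt_of_le hw with h0 | h0
  · simp [← h0]
  · have hw0 : (w : ℂ) ≠ 0 := by exact_mod_cast h0.ne'
    have hexp : Complex.exp (-(Complex.I * (s : ℂ) * (w : ℂ)))
        = (Real.cos (s * w) : ℂ) - (Real.sin (s * w) : ℂ) * Complex.I := by
      have : -(Complex.I * (s : ℂ) * (w : ℂ)) = (-(s * w) : ℝ) * Complex.I := by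
        push_cast; ring
      rw [this, Complex.exp_mul_I]
      push_cast
      rw [Complex.cos_neg, Complex.sin_neg]
      ring
    rw [hexp]
    field_simp

/-- The complex functional-calculus kernel `e^{-is√A}/(2√A)` decomposes as
`cos(s√A)/(2√A) - (i/2) sin(s√A)/√A` (real functional calculi). -/
lemma two_point_op_decomp {H : Type*} [NormedAddCommGroup H] [InnerProductSpace ℂ H]
    [CompleteSpace H]
    (A : H →L[ℂ] H) (hA : IsSelfAdjoint A) (c : ℝ) (hc : 0 < c)
    (hspec : spectrum ℝ A ⊆ Set.Ici c) (s : ℝ) :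
    cfc (fun z : ℂ =>
      Complex.exp (-(Complex.I * (s : ℂ) * (Real.sqrt z.re : ℂ)))
        / (2 * (Real.sqrt z.re : ℂ))) A
    = cfc (fun x : ℝ => Real.cos (s * Real.sqrt x) / (2 * Real.sqrt x)) A
      - (Complex.I / 2) • cfc (fun x : ℝ => Real.sin (s * Real.sqrt x) / Real.sqrt x) A := by
  have hmem : ∀ z ∈ spectrum ℂ A, c ≤ z.re := by
    intro z hz
    exact hspec (hA.spectrumRestricts.image ▸ Set.mem_image_of_mem Complex.re hz)
  have hca : ∀ (f : ℝ → ℂ), Continuous f → ∀ z ∈ spectrum ℂ A,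
      ContinuousAt (fun z : ℂ => f (Real.sqrt z.re) / (Real.sqrt z.re : ℂ)) z := by
    intro f hf z hz
    have hzre : (0:ℝ) < z.re := lt_of_lt_of_le hc (hmem z hz)
    have hnum : Continuous fun z : ℂ => f (Real.sqrt z.re) :=
      hf.comp (Real.continuous_sqrt.comp Complex.continuous_re)
    have hden : Continuous fun z : ℂ => (Real.sqrt z.re : ℂ) :=
      Complex.continuous_ofReal.comp (Real.continuous_sqrt.comp Complex.continuous_re)
    exact (hnum.continuousAt).div (hden.continuousAt)
      (by exact_mod_cast (Real.sqrt_pos.mpr hzre).ne')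
  have hca2 : ∀ (f : ℝ → ℂ), Continuous f → ∀ z ∈ spectrum ℂ A,
      ContinuousAt (fun z : ℂ => f (Real.sqrt z.re) / (2 * (Real.sqrt z.re : ℂ))) z := by
    intro f hf z hz
    have hzre : (0:ℝ) < z.re := lt_of_lt_of_le hc (hmem z hz)
    have hnum : Continuous fun z : ℂ => f (Real.sqrt z.re) :=
      hf.comp (Real.continuous_sqrt.comp Complex.continuous_re)
    have hden : Continuous fun z : ℂ => 2 * (Real.sqrt z.re : ℂ) :=
      continuous_const.mul
        (Complex.continuous_ofReal.comp (Real.continuous_sqrt.comp Complex.continuous_re))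
    refine (hnum.continuousAt).div (hden.continuousAt) ?_
    have : Real.sqrt z.re ≠ 0 := (Real.sqrt_pos.mpr hzre).ne'
    simp [this]
  have hKc : ContinuousOn (fun z : ℂ =>
      Complex.exp (-(Complex.I * (s : ℂ) * (Real.sqrt z.re : ℂ))) / (2 * (Real.sqrt z.re : ℂ)))
      (spectrum ℂ A) := by
    intro z hz
    exact (hca2 (fun w => Complex.exp (-(Complex.I * (s : ℂ) * (w : ℂ)))) (by fun_prop) z
      hz).continuousWithinAt
  have hCc : ContinuousOn (fun z : ℂ =>
      ((Real.cos (s * Real.sqrt z.re) : ℂ)) / (2 * (Real.sqrt z.re : ℂ))) (spectrum ℂ A) := by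
    intro z hz
    exact (hca2 (fun w => ((Real.cos (s * w) : ℂ))) (by fun_prop) z hz).continuousWithinAt
  have hSc : ContinuousOn (fun z : ℂ =>
      ((Real.sin (s * Real.sqrt z.re) : ℂ)) / ((Real.sqrt z.re : ℂ))) (spectrum ℂ A) := by
    intro z hz
    exact (hca (fun w => ((Real.sin (s * w) : ℂ))) (by fun_prop) z hz).continuousWithinAt
  rw [cfc_real_eq_complex (fun x : ℝ => Real.cos (s * Real.sqrt x) / (2 * Real.sqrt x)) hA,
      cfc_real_eq_complex (fun x : ℝ => Real.sin (s * Real.sqrt x) / Real.sqrt x) hA]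
  have e1 : (fun z : ℂ => ((Real.cos (s * Real.sqrt z.re) / (2 * Real.sqrt z.re) : ℝ) : ℂ))
      = fun z : ℂ => ((Real.cos (s * Real.sqrt z.re) : ℂ)) / (2 * (Real.sqrt z.re : ℂ)) := by
    funext z; push_cast; ring
  have e2 : (fun z : ℂ => ((Real.sin (s * Real.sqrt z.re) / Real.sqrt z.re : ℝ) : ℂ))
      = fun z : ℂ => ((Real.sin (s * Real.sqrt z.re) : ℂ)) / ((Real.sqrt z.re : ℂ)) := by
    funext z; push_cast; ring
  rw [e1, e2, ← cfc_const_mul (Complex.I / 2) _ A hSc, ← cfc_sub _ _ A hCc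
      (by exact continuousOn_const.mul hSc)]
  exact cfc_congr fun z _ => two_point_kernel_ptwise s (Real.sqrt z.re) (Real.sqrt_nonneg _)

/-- Continuity of a parametrized continuous functional calculus. -/
lemma two_point_cfc_cont_param {H : Type*} [NormedAddCommGroup H] [InnerProductSpace ℂ H]
    [CompleteSpace H]
    (A : H →L[ℂ] H) (hA : IsSelfAdjoint A) (g : ℝ → ℝ → ℝ)
    (hg : Continuous fun p : ℝ × ℝ => g p.1 p.2) :
    Continuous fun s => cfc (g s) A := by
  have hgs : ∀ s : ℝ, Continuous (g s) := fun s =>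
    hg.comp (continuous_const.prodMk continuous_id)
  let F : ℝ → C(spectrum ℝ A, ℝ) := fun s => ⟨fun x => g s x, ((hgs s).comp continuous_subtype_val)⟩
  have hF : Continuous F := by
    apply ContinuousMap.continuous_of_continuous_uncurry
    exact hg.comp ((continuous_fst).prodMk (continuous_subtype_val.comp continuous_snd))
  have key : ∀ s, cfc (g s) A = cfcHom hA (F s) := by
    intro s
    rw [cfc_apply (g s) A hA (hgs s).continuousOn]
    rfl
  simp only [key]
  exact (cfcHom_isClosedEmbedding hA).continuous.comp hF

/-- Integrability of the compactly supported pairing against a norm-continuous operator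
family. -/
lemma two_point_aux_integrable {H : Type*} [NormedAddCommGroup H] [InnerProductSpace ℂ H]
    [CompleteSpace H]
    (g₁ g₂ : ℝ → H) (h₁ : Continuous g₁) (h₁c : HasCompactSupport g₁)
    (h₂ : Continuous g₂) (h₂c : HasCompactSupport g₂)
    (T : ℝ → H →L[ℂ] H) (hT : Continuous T) :
    Integrable (fun p : ℝ × ℝ => ⟪g₁ p.1, (T (p.1 - p.2)) (g₂ p.2)⟫_ℂ)
      (volume.prod volume) := by
  have hcont : Continuous fun p : ℝ × ℝ => ⟪g₁ p.1, (T (p.1 - p.2)) (g₂ p.2)⟫_ℂ := by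
    apply Continuous.inner (h₁.comp continuous_fst)
    exact isBoundedBilinearMap_apply.continuous.comp
      ((hT.comp (continuous_fst.sub continuous_snd)).prodMk (h₂.comp continuous_snd))
  have hsupp : HasCompactSupport fun p : ℝ × ℝ => ⟪g₁ p.1, (T (p.1 - p.2)) (g₂ p.2)⟫_ℂ := by
    apply HasCompactSupport.intro (h₁c.prod h₂c)
    intro p hp
    rw [Set.mem_prod, not_and_or] at hp
    rcases hp with h | h
    · rw [image_eq_zero_of_notMem_tsupport h, inner_zero_left]
    · rw [image_eq_zero_of_notMem_tsupport h, map_zero, inner_zero_right]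
  rw [← MeasureTheory.Measure.volume_eq_prod]
  exact hcont.integrable_of_hasCompactSupport hsupp

/-- Decomposition of the ground-state two-point function: with kernels
`K s = e^{−i s √A}/(2√A)`, `C s = cos(s√A)/(2√A)` and `S s = sin(s√A)/√A` given by the
continuous functional calculus of a bounded self-adjoint `A` with spectrum in `[c,∞)`,
`c > 0`, the two-point pairing satisfies `λ₂ = C₂ − (i/2) G₂`, with `C₂` Hermitian and
`G₂` anti-Hermitian: the antisymmetric part of `λ₂` is `−(i/2)` times the causal
propagator pairing `G₂`. -/
theorem two_point_decomposition {H : Type*} [NormedAddCommGroup H]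
    [InnerProductSpace ℂ H] [CompleteSpace H]
    (A : H →L[ℂ] H) (hA : IsSelfAdjoint A) (c : ℝ) (hc : 0 < c)
    (hspec : spectrum ℝ A ⊆ Set.Ici c)
    (K C S : ℝ → H →L[ℂ] H)
    (hK : ∀ s : ℝ, K s = cfc (fun z : ℂ =>
      Complex.exp (-(Complex.I * (s : ℂ) * (Real.sqrt z.re : ℂ)))
        / (2 * (Real.sqrt z.re : ℂ))) A)
    (hC : ∀ s : ℝ, C s = cfc (fun x : ℝ =>
      Real.cos (s * Real.sqrt x) / (2 * Real.sqrt x)) A)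
    (hS : ∀ s : ℝ, S s = cfc (fun x : ℝ =>
      Real.sin (s * Real.sqrt x) / Real.sqrt x) A)
    (lam₂ C₂ G₂ : (ℝ → H) → (ℝ → H) → ℂ)
    (hlam₂ : ∀ f₁ f₂ : ℝ → H,
      lam₂ f₁ f₂ = ∫ t : ℝ, ∫ t' : ℝ, ⟪f₁ t, (K (t - t')) (f₂ t')⟫_ℂ)
    (hC₂ : ∀ f₁ f₂ : ℝ → H,
      C₂ f₁ f₂ = ∫ t : ℝ, ∫ t' : ℝ, ⟪f₁ t, (C (t - t')) (f₂ t')⟫_ℂ)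
    (hG₂ : ∀ f₁ f₂ : ℝ → H,
      G₂ f₁ f₂ = ∫ t : ℝ, ∫ t' : ℝ, ⟪f₁ t, (S (t - t')) (f₂ t')⟫_ℂ)
    (f₁ f₂ : ℝ → H) (hf₁ : Continuous f₁) (hf₁c : HasCompactSupport f₁)
    (hf₂ : Continuous f₂) (hf₂c : HasCompactSupport f₂) :
    lam₂ f₁ f₂ = C₂ f₁ f₂ - (Complex.I / 2) * G₂ f₁ f₂ ∧
      C₂ f₁ f₂ = starRingEnd ℂ (C₂ f₂ f₁) ∧
      G₂ f₁ f₂ = -starRingEnd ℂ (G₂ f₂ f₁) := by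
  -- continuity of the operator families
  have hden : ∀ x : ℝ, Real.sqrt (max x c) ≠ 0 := fun x =>
    (Real.sqrt_pos.mpr (lt_of_lt_of_le hc (le_max_right x c))).ne'
  have hCrep : ∀ s : ℝ, C s
      = cfc (fun x : ℝ => Real.cos (s * Real.sqrt x) / (2 * Real.sqrt (max x c))) A := by
    intro s
    rw [hC s]
    exact cfc_congr fun x hx => by rw [max_eq_left (hspec hx)]
  have hSrep : ∀ s : ℝ, S s
      = cfc (fun x : ℝ => Real.sin (s * Real.sqrt x) / Real.sqrt (max x c)) A := by
    intro s
    rw [hS s]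
    exact cfc_congr fun x hx => by rw [max_eq_left (hspec hx)]
  have hCcont : Continuous C := by
    have := two_point_cfc_cont_param A hA
      (fun s x => Real.cos (s * Real.sqrt x) / (2 * Real.sqrt (max x c)))
      (by
        apply Continuous.div (by fun_prop) (by fun_prop)
        intro p
        simp [hden p.2])
    simpa only [← hCrep] using this
  have hScont : Continuous S := by
    have := two_point_cfc_cont_param A hA
      (fun s x => Real.sin (s * Real.sqrt x) / Real.sqrt (max x c))
      (by
        apply Continuous.div (by fun_prop) (by fun_prop)
        intro p
        exact hden p.2)
    simpa only [← hSrep] using this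
  -- operator-level decomposition and symmetries
  have hKCS : ∀ s : ℝ, K s = C s - (Complex.I / 2) • S s := by
    intro s
    rw [hK s, hC s, hS s]
    exact two_point_op_decomp A hA c hc hspec s
  have hCsa : ∀ s : ℝ, IsSelfAdjoint (C s) := fun s => hC s ▸ cfc_predicate _ A
  have hSsa : ∀ s : ℝ, IsSelfAdjoint (S s) := fun s => hS s ▸ cfc_predicate _ A
  have hCsym : ∀ (s : ℝ) (x y : H), ⟪(C s) x, y⟫_ℂ = ⟪x, (C s) y⟫_ℂ := fun s =>
    ContinuousLinearMap.isSelfAdjoint_iff_isSymmetric.mp (hCsa s)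
  have hSsym : ∀ (s : ℝ) (x y : H), ⟪(S s) x, y⟫_ℂ = ⟪x, (S s) y⟫_ℂ := fun s =>
    ContinuousLinearMap.isSelfAdjoint_iff_isSymmetric.mp (hSsa s)
  have hCeven : ∀ a b : ℝ, C (b - a) = C (a - b) := by
    intro a b
    rw [hC (b - a), hC (a - b)]
    congr 1
    funext x
    rw [show b - a = -(a - b) by ring, neg_mul, Real.cos_neg]
  have hSodd : ∀ a b : ℝ, S (b - a) = -S (a - b) := by
    intro a b
    rw [hS (b - a), hS (a - b), ← cfc_neg]
    congr 1
    funext x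
    rw [show b - a = -(a - b) by ring, neg_mul, Real.sin_neg, neg_div]
  -- integrability facts
  have intC := two_point_aux_integrable f₁ f₂ hf₁ hf₁c hf₂ hf₂c C hCcont
  have intS := two_point_aux_integrable f₁ f₂ hf₁ hf₁c hf₂ hf₂c S hScont
  have intC' := two_point_aux_integrable f₂ f₁ hf₂ hf₂c hf₁ hf₁c C hCcont
  have intS' := two_point_aux_integrable f₂ f₁ hf₂ hf₂c hf₁ hf₁c S hScont
  have intCsw : Integrable (fun p : ℝ × ℝ => ⟪f₁ p.2, (C (p.1 - p.2)) (f₂ p.1)⟫_ℂ)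
      (volume.prod volume) := by
    have base := two_point_aux_integrable f₁ f₂ hf₁ hf₁c hf₂ hf₂c (fun s => C (-s))
      (hCcont.comp continuous_neg)
    simp only [neg_sub] at base
    exact base.swap
  have intSsw : Integrable (fun p : ℝ × ℝ => ⟪f₁ p.2, (S (p.1 - p.2)) (f₂ p.1)⟫_ℂ)
      (volume.prod volume) := by
    have base := two_point_aux_integrable f₁ f₂ hf₁ hf₁c hf₂ hf₂c (fun s => S (-s))
      (hScont.comp continuous_neg)
    simp only [neg_sub] at base
    exact base.swap
  -- first claim
  have part1 : lam₂ f₁ f₂ = C₂ f₁ f₂ - (Complex.I / 2) * G₂ f₁ f₂ := by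
    have e1 : ∀ t t' : ℝ, ⟪f₁ t, (K (t - t')) (f₂ t')⟫_ℂ
        = ⟪f₁ t, (C (t - t')) (f₂ t')⟫_ℂ
          - (Complex.I / 2) * ⟪f₁ t, (S (t - t')) (f₂ t')⟫_ℂ := by
      intro t t'
      rw [hKCS (t - t'), ContinuousLinearMap.sub_apply, ContinuousLinearMap.smul_apply,
        inner_sub_right, inner_smul_right]
    rw [hlam₂ f₁ f₂, hC₂ f₁ f₂, hG₂ f₁ f₂]
    calc ∫ t : ℝ, ∫ t' : ℝ, ⟪f₁ t, (K (t - t')) (f₂ t')⟫_ℂ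
        = ∫ t : ℝ, ∫ t' : ℝ, (⟪f₁ t, (C (t - t')) (f₂ t')⟫_ℂ
            - (Complex.I / 2) * ⟪f₁ t, (S (t - t')) (f₂ t')⟫_ℂ) := by
          simp only [e1]
      _ = ∫ p : ℝ × ℝ, (⟪f₁ p.1, (C (p.1 - p.2)) (f₂ p.2)⟫_ℂ
            - (Complex.I / 2) * ⟪f₁ p.1, (S (p.1 - p.2)) (f₂ p.2)⟫_ℂ)
            ∂(volume.prod volume) :=
          integral_integral (by exact intC.sub (intS.const_mul _))
      _ = (∫ p : ℝ × ℝ, ⟪f₁ p.1, (C (p.1 - p.2)) (f₂ p.2)⟫_ℂ ∂(volume.prod volume))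
            - (Complex.I / 2)
              * ∫ p : ℝ × ℝ, ⟪f₁ p.1, (S (p.1 - p.2)) (f₂ p.2)⟫_ℂ ∂(volume.prod volume) := by
          rw [integral_sub intC (intS.const_mul _), MeasureTheory.integral_const_mul]
      _ = (∫ t : ℝ, ∫ t' : ℝ, ⟪f₁ t, (C (t - t')) (f₂ t')⟫_ℂ)
            - (Complex.I / 2) * ∫ t : ℝ, ∫ t' : ℝ, ⟪f₁ t, (S (t - t')) (f₂ t')⟫_ℂ := by
          rw [integral_integral intC, integral_integral intS]
  -- Hermitian symmetry of C₂
  have hCanti : starRingEnd ℂ (C₂ f₂ f₁) = C₂ f₁ f₂ := by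
    rw [hC₂ f₂ f₁, hC₂ f₁ f₂]
    have step1 : (starRingEnd ℂ) (∫ t : ℝ, ∫ t' : ℝ, ⟪f₂ t, (C (t - t')) (f₁ t')⟫_ℂ)
        = ∫ t : ℝ, ∫ t' : ℝ, ⟪f₁ t', (C (t - t')) (f₂ t)⟫_ℂ := by
      rw [← integral_conj]
      congr 1
      funext t
      rw [← integral_conj]
      congr 1
      funext t'
      rw [inner_conj_symm, hCsym]
    rw [step1, MeasureTheory.integral_integral_swap intCsw]
    congr 1
    funext a
    congr 1
    funext b
    rw [hCeven a b]
  -- anti-Hermitian symmetry of G₂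
  have hGanti : starRingEnd ℂ (G₂ f₂ f₁) = -G₂ f₁ f₂ := by
    rw [hG₂ f₂ f₁, hG₂ f₁ f₂]
    have step1 : (starRingEnd ℂ) (∫ t : ℝ, ∫ t' : ℝ, ⟪f₂ t, (S (t - t')) (f₁ t')⟫_ℂ)
        = ∫ t : ℝ, ∫ t' : ℝ, ⟪f₁ t', (S (t - t')) (f₂ t)⟫_ℂ := by
      rw [← integral_conj]
      congr 1
      funext t
      rw [← integral_conj]
      congr 1
      funext t'
      rw [inner_conj_symm, hSsym]
    rw [step1, MeasureTheory.integral_integral_swap intSsw, ← MeasureTheory.integral_neg]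
    congr 1
    funext a
    rw [← MeasureTheory.integral_neg]
    congr 1
    funext b
    rw [hSodd a b, ContinuousLinearMap.neg_apply, inner_neg_right]
  exact ⟨part1, hCanti.symm, by rw [hGanti, neg_neg]⟩
end

section
/- Let H be a complex Hilbert space and A : H →L[ℂ] H a bounded self-adjoint operator whose spectrum is contained in [c, ∞) for some c > 0. For s ∈ ℝ let K s be the continuous functional calculus of A applied to x ↦ exp(−i·s·√x)/(2√x), and for continuous compactly supported f₁, f₂ : ℝ → H define λ₂(f₁, f₂) := ∫∫ ⟪f₁ t, (K (t − t′)) (f₂ t′)⟫ dt′ dt. If f₁, f₂ : ℝ → H are twice continuously differentiable with compact support, then λ₂(f₁″ + A ∘ f₁, f₂) = 0 and λ₂(f₁, f₂″ + A ∘ f₂) = 0; that is, λ₂ is a weak bi-solution of the abstract wave equation u″ + A u = 0 in each argument. -/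
/-!
By the functional calculus, `K s = e^{-is√A}/(2√A) = (2√A)⁻¹ exp (s • X)` with `X = -i√A`,
and `X² = -A`; hence `K″ = -A K = -K A`, and `(K s)* = K (-s)`. So for fixed `t'` and `v`,
`w t = K (t - t') v` solves `w″ + A w = 0`, and for compactly supported `u` the function
`⟪u″ + A u, w⟫ = (⟪u′, w⟫ - ⟪u, w′⟫)′` integrates to zero. This annihilates the first argument
of `λ₂` after exchanging the two integrals, and the second one after moving `K` across the
inner product.
-/

open scoped InnerProductSpace
open MeasureTheory

theorem HasCompactSupport.inner_left {α 𝕜 E : Type*} [TopologicalSpace α] [RCLike 𝕜]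
    [NormedAddCommGroup E] [InnerProductSpace 𝕜 E] {f : α → E} (hf : HasCompactSupport f)
    (g : α → E) : HasCompactSupport fun x => ⟪f x, g x⟫_𝕜 :=
  hf.mono fun x hx hfx => hx (by simp [hfx])

section Wave

variable {E : Type*} [NormedAddCommGroup E] [InnerProductSpace ℂ E]

theorem integrable_inner_apply_sub {K : ℝ → E →L[ℂ] E} (hK : Continuous K) {u v : ℝ → E}
    (hu : Continuous u) (huc : HasCompactSupport u) (hv : Continuous v)
    (hvc : HasCompactSupport v) :
    Integrable (Function.uncurry fun t t' => ⟪u t, K (t - t') (v t')⟫_ℂ) (volume.prod volume) := by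
  refine Continuous.integrable_of_hasCompactSupport ?_ ?_
  · exact (hu.comp continuous_fst).inner
      ((hK.comp (continuous_fst.sub continuous_snd)).clm_apply (hv.comp continuous_snd))
  · refine HasCompactSupport.intro (huc.prod hvc) fun ⟨t, t'⟩ hp => ?_
    rcases not_and_or.1 hp with h | h <;> simp [image_eq_zero_of_notMem_tsupport h]

variable (A : E →L[ℂ] E) {u : ℝ → E}

theorem ContDiff.continuous_deriv_deriv_add (hu : ContDiff ℝ 2 u) :
    Continuous fun t => deriv (deriv u) t + A (u t) :=
  ((hu.iterate_deriv' 1 1).continuous_deriv le_rfl).add (A.continuous.comp hu.continuous)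

theorem HasCompactSupport.deriv_deriv_add (huc : HasCompactSupport u) :
    HasCompactSupport fun t => deriv (deriv u) t + A (u t) :=
  huc.deriv.deriv.comp₂_left (huc.comp_left A.map_zero) (add_zero 0)

variable {A}

theorem integral_inner_wave_eq_zero (hA : (A : E →ₗ[ℂ] E).IsSymmetric)
    (hu : ContDiff ℝ 2 u) (huc : HasCompactSupport u) {w w' : ℝ → E}
    (hw : ∀ t, HasDerivAt w (w' t) t) (hw' : ∀ t, HasDerivAt w' (-A (w t)) t) :
    ∫ t, ⟪deriv (deriv u) t + A (u t), w t⟫_ℂ = 0 := by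
  have hu₁ : ContDiff ℝ 1 (deriv u) := hu.iterate_deriv' 1 1
  have hw_cont : Continuous w := continuous_iff_continuousAt.2 fun t => (hw t).continuousAt
  have hw'_cont : Continuous w' := continuous_iff_continuousAt.2 fun t => (hw' t).continuousAt
  have hW : ∀ t, HasDerivAt (fun t => ⟪deriv u t, w t⟫_ℂ - ⟪u t, w' t⟫_ℂ)
      ⟪deriv (deriv u) t + A (u t), w t⟫_ℂ t := by
    intro t
    have h₁ := (hu₁.differentiable one_ne_zero t).hasDerivAt.inner ℂ (hw t)
    have h₂ := (hu.differentiable two_ne_zero t).hasDerivAt.inner ℂ (hw' t)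
    refine (h₁.sub h₂).congr_deriv ?_
    rw [inner_add_left, inner_neg_right, show ⟪A (u t), w t⟫_ℂ = ⟪u t, A (w t)⟫_ℂ from hA _ _]
    ring
  refine integral_eq_zero_of_hasDerivAt_of_integrable hW ?_ ?_
  · exact ((hu.continuous_deriv_deriv_add A).inner hw_cont).integrable_of_hasCompactSupport
      ((huc.deriv_deriv_add A).inner_left w)
  · exact ((hu₁.continuous.inner hw_cont).sub
      (hu.continuous.inner hw'_cont)).integrable_of_hasCompactSupport
      ((huc.deriv.inner_left w).comp₂_left (huc.inner_left w') (sub_zero 0))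

end Wave

section CStarAlgebra

open Complex

variable {𝒜 : Type*} [CStarAlgebra 𝒜] {a : 𝒜}

theorem IsSelfAdjoint.re_pos_of_mem_spectrum (ha : IsSelfAdjoint a)
    (hspec : spectrum ℝ a ⊆ Set.Ioi 0) {z : ℂ} (hz : z ∈ spectrum ℂ a) : 0 < z.re :=
  hspec (ha.spectrumRestricts.apply_mem hz)

noncomputable def waveKernel (a : 𝒜) (s : ℝ) : 𝒜 :=
  cfc (fun z : ℂ => exp (-(I * (s : ℂ) * (Real.sqrt z.re : ℂ))) / (2 * (Real.sqrt z.re : ℂ))) a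

noncomputable def waveGenerator (a : 𝒜) : 𝒜 :=
  cfc (fun z : ℂ => -(I * (Real.sqrt z.re : ℂ))) a

theorem waveGenerator_mul_self (ha : IsSelfAdjoint a) (hspec : spectrum ℝ a ⊆ Set.Ioi 0) :
    waveGenerator a * waveGenerator a = -a := by
  have : IsStarNormal a := ha.isStarNormal
  rw [waveGenerator, ← cfc_mul (fun z : ℂ => -(I * (Real.sqrt z.re : ℂ))) _ a,
    ← cfc_neg_id (R := ℂ) a]
  refine cfc_congr fun z hz => ?_
  have hsq : (Real.sqrt z.re : ℂ) * (Real.sqrt z.re : ℂ) = z := by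
    rw [← ofReal_mul, Real.mul_self_sqrt (ha.re_pos_of_mem_spectrum hspec hz).le,
      ← ha.mem_spectrum_eq_re hz]
  linear_combination (I * I) * hsq + z * I_mul_I

theorem waveKernel_eq_mul_exp (ha : IsSelfAdjoint a) (hspec : spectrum ℝ a ⊆ Set.Ioi 0)
    (s : ℝ) : waveKernel a s = cfc (fun z : ℂ => (2 * (Real.sqrt z.re : ℂ))⁻¹) a *
      NormedSpace.exp (s • waveGenerator a) := by
  have : IsStarNormal a := ha.isStarNormal
  have hinv : ContinuousOn (fun z : ℂ => (2 * (Real.sqrt z.re : ℂ))⁻¹) (spectrum ℂ a) := by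
    refine ContinuousOn.inv₀ (by fun_prop) fun z hz => ?_
    simpa using (Real.sqrt_pos.2 (ha.re_pos_of_mem_spectrum hspec hz)).ne'
  calc waveKernel a s
      = cfc (fun z : ℂ => (2 * (Real.sqrt z.re : ℂ))⁻¹ *
          exp (s • -(I * (Real.sqrt z.re : ℂ)))) a := by
        refine cfc_congr fun z _ => ?_
        simp only [div_eq_inv_mul, Complex.real_smul]
        ring_nf
    _ = cfc (fun z : ℂ => (2 * (Real.sqrt z.re : ℂ))⁻¹) a *
          cfc (fun z : ℂ => exp (s • -(I * (Real.sqrt z.re : ℂ)))) a := cfc_mul _ _ a hinv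
    _ = _ := by
        rw [cfc_comp' exp (fun z : ℂ => s • -(I * (Real.sqrt z.re : ℂ))) a,
          CFC.complex_exp_eq_normedSpace_exp,
          cfc_smul s (fun z : ℂ => -(I * (Real.sqrt z.re : ℂ))) a, waveGenerator]

theorem hasDerivAt_waveKernel (ha : IsSelfAdjoint a) (hspec : spectrum ℝ a ⊆ Set.Ioi 0)
    (s : ℝ) : HasDerivAt (waveKernel a) (waveKernel a s * waveGenerator a) s := by
  rw [funext (waveKernel_eq_mul_exp ha hspec), mul_assoc]
  exact (hasDerivAt_exp_smul_const _ s).const_mul _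

theorem continuous_waveKernel (ha : IsSelfAdjoint a) (hspec : spectrum ℝ a ⊆ Set.Ioi 0) :
    Continuous (waveKernel a) :=
  continuous_iff_continuousAt.2 fun s => (hasDerivAt_waveKernel ha hspec s).continuousAt

theorem commute_waveKernel (ha : IsSelfAdjoint a) (s : ℝ) : Commute (waveKernel a s) a := by
  have : IsStarNormal a := ha.isStarNormal
  conv_rhs => rw [← cfc_id' ℂ a]
  exact cfc_commute_cfc _ _ a

theorem hasDerivAt_waveKernel_mul_waveGenerator (ha : IsSelfAdjoint a)
    (hspec : spectrum ℝ a ⊆ Set.Ioi 0) (s : ℝ) :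
    HasDerivAt (fun s => waveKernel a s * waveGenerator a) (-(a * waveKernel a s)) s := by
  have h := (hasDerivAt_waveKernel ha hspec s).mul_const (waveGenerator a)
  rwa [mul_assoc, waveGenerator_mul_self ha hspec, mul_neg, (commute_waveKernel ha s).eq] at h

theorem star_waveKernel (a : 𝒜) (s : ℝ) : star (waveKernel a s) = waveKernel a (-s) := by
  rw [waveKernel, ← cfc_star]
  refine cfc_congr fun z _ => ?_
  simp [← exp_conj]

end CStarAlgebra

section Hilbert

variable {H : Type*} [NormedAddCommGroup H] [InnerProductSpace ℂ H] [CompleteSpace H]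
  {A : H →L[ℂ] H}

theorem integral_inner_wave_waveKernel_apply_eq_zero (hA : IsSelfAdjoint A)
    (hspec : spectrum ℝ A ⊆ Set.Ioi 0) {u : ℝ → H} (hu : ContDiff ℝ 2 u)
    (huc : HasCompactSupport u) (t₀ : ℝ) (v : H) :
    ∫ t, ⟪deriv (deriv u) t + A (u t), waveKernel A (t - t₀) v⟫_ℂ = 0 := by
  have hasDerivAt_apply : ∀ {F : ℝ → H →L[ℂ] H} {F' : H →L[ℂ] H} {t : ℝ},
      HasDerivAt F F' t → HasDerivAt (fun t => F t v) (F' v) t := fun hF =>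
    ((ContinuousLinearMap.apply ℂ H v).restrictScalars ℝ).hasFDerivAt.comp_hasDerivAt _ hF
  refine integral_inner_wave_eq_zero hA.isSymmetric hu huc
    (w' := fun t => (waveKernel A (t - t₀) * waveGenerator A) v)
    (fun t => hasDerivAt_apply ((hasDerivAt_waveKernel hA hspec _).comp_sub_const t t₀))
    fun t => ?_
  simpa using hasDerivAt_apply
    ((hasDerivAt_waveKernel_mul_waveGenerator hA hspec _).comp_sub_const t t₀)

theorem inner_waveKernel_apply (x y : H) (s : ℝ) :
    ⟪x, waveKernel A s y⟫_ℂ = starRingEnd ℂ ⟪y, waveKernel A (-s) x⟫_ℂ := by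
  rw [← ContinuousLinearMap.adjoint_inner_left, ← ContinuousLinearMap.star_eq_adjoint,
    star_waveKernel, inner_conj_symm]

theorem integral_inner_waveKernel_apply_wave_eq_zero (hA : IsSelfAdjoint A)
    (hspec : spectrum ℝ A ⊆ Set.Ioi 0) {u : ℝ → H} (hu : ContDiff ℝ 2 u)
    (huc : HasCompactSupport u) (t₀ : ℝ) (v : H) :
    ∫ t, ⟪v, waveKernel A (t₀ - t) (deriv (deriv u) t + A (u t))⟫_ℂ = 0 := by
  simp_rw [inner_waveKernel_apply v, integral_conj, neg_sub,
    integral_inner_wave_waveKernel_apply_eq_zero hA hspec hu huc, map_zero]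

end Hilbert

/-- Bi-solution property of the ground-state two-point function: with kernel
`K s = e^{−i s √A}/(2√A)` for a bounded self-adjoint `A` with spectrum in `[c,∞)`,
`c > 0`, the pairing `λ₂(f₁,f₂) = ∫∫ ⟪f₁ t, K(t−t′) f₂ t′⟫ dt′ dt` annihilates
`f″ + A ∘ f` in each argument, i.e. `λ₂` is a weak bi-solution of `u″ + A u = 0`. -/
theorem two_point_bisolution {H : Type*} [NormedAddCommGroup H]
    [InnerProductSpace ℂ H] [CompleteSpace H]
    (A : H →L[ℂ] H) (hA : IsSelfAdjoint A) (c : ℝ) (hc : 0 < c)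
    (hspec : spectrum ℝ A ⊆ Set.Ici c)
    (K : ℝ → H →L[ℂ] H)
    (hK : ∀ s : ℝ, K s = cfc (fun z : ℂ =>
      Complex.exp (-(Complex.I * (s : ℂ) * (Real.sqrt z.re : ℂ)))
        / (2 * (Real.sqrt z.re : ℂ))) A)
    (lam₂ : (ℝ → H) → (ℝ → H) → ℂ)
    (hlam₂ : ∀ f₁ f₂ : ℝ → H,
      lam₂ f₁ f₂ = ∫ t : ℝ, ∫ t' : ℝ, ⟪f₁ t, (K (t - t')) (f₂ t')⟫_ℂ)
    (f₁ f₂ : ℝ → H) (hf₁ : ContDiff ℝ 2 f₁) (hf₁c : HasCompactSupport f₁)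
    (hf₂ : ContDiff ℝ 2 f₂) (hf₂c : HasCompactSupport f₂) :
    lam₂ (fun t => deriv (deriv f₁) t + A (f₁ t)) f₂ = 0 ∧
      lam₂ f₁ (fun t => deriv (deriv f₂) t + A (f₂ t)) = 0 := by
  obtain rfl : K = waveKernel A := funext hK
  have hpos : spectrum ℝ A ⊆ Set.Ioi 0 := hspec.trans (Set.Ici_subset_Ioi.2 hc)
  constructor
  · rw [hlam₂, integral_integral_swap (integrable_inner_apply_sub (continuous_waveKernel hA hpos)
      (hf₁.continuous_deriv_deriv_add A) (hf₁c.deriv_deriv_add A) hf₂.continuous hf₂c)]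
    simp_rw [integral_inner_wave_waveKernel_apply_eq_zero hA hpos hf₁ hf₁c, integral_zero]
  · rw [hlam₂]
    simp_rw [integral_inner_waveKernel_apply_wave_eq_zero hA hpos hf₂ hf₂c, integral_zero]
end
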